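/- arXiv:2109.03527 — 5 statements merged into one kernel-verified Lean document; each statement's English description precedes it below -/
import Mathlib

section
/- Let $g_n = b_0 + \mathop{K}_{i=1}^{n} (c_i / b_i)$ be the $n$-th approximant of a continued fraction with $g_n = p_n/q_n$ given by the standard recursion, and assume $p_n \neq 0$. If $T_n$ is a tridiagonal $(n+1)\times(n+1)$ matrix with diagonal entries $\beta_i = b_i$ and off-diagonal entries satisfying $-\alpha_i \gamma_i = c_i$ for $i = 1, \ldots, n$, then $T_n$ is nonsingular and $(T_n^{-1})_{1,1} = q_n / p_n = g_n^{-1}$. -/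
open Matrix Fin

def triF (d a g : ℕ → ℂ) (i j : ℕ) : ℂ :=
  if i = j then d i else if i = j + 1 then a i else if j = i + 1 then g j else 0

def tri (d a g : ℕ → ℂ) (m : ℕ) : Matrix (Fin m) (Fin m) ℂ :=
  Matrix.of fun i j => triF d a g i j

lemma coe_succAbove' {M : ℕ} (p : Fin (M + 1)) (i : Fin M) :
    ((p.succAbove i : Fin (M + 1)) : ℕ) = if (i : ℕ) < (p : ℕ) then (i : ℕ) else (i : ℕ) + 1 := by
  rw [Fin.succAbove]
  split <;> simp_all [Fin.lt_def]

lemma tri_det_rec (d a g : ℕ → ℂ) (m : ℕ) :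
    (tri d a g (m + 2)).det =
      d (m + 1) * (tri d a g (m + 1)).det - a (m + 1) * g (m + 1) * (tri d a g m).det := by
  rw [Matrix.det_succ_row _ (Fin.last (m + 1))]
  rw [Fin.sum_univ_castSucc, Fin.sum_univ_castSucc]
  have hz : ∀ j : Fin m,
      (-1 : ℂ) ^ ((Fin.last (m+1) : ℕ) + ((j.castSucc.castSucc : Fin (m+2)) : ℕ)) *
        tri d a g (m+2) (Fin.last (m+1)) j.castSucc.castSucc *
        ((tri d a g (m+2)).submatrix (Fin.last (m+1)).succAbove
          (j.castSucc.castSucc).succAbove).det = 0 := by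
    intro j
    have : tri d a g (m+2) (Fin.last (m+1)) j.castSucc.castSucc = 0 := by
      have hj := j.isLt
      simp only [tri, triF, Matrix.of_apply, Fin.coe_castSucc, Fin.val_last]
      rw [if_neg (by omega), if_neg (by omega), if_neg (by omega)]
    rw [this, mul_zero, zero_mul]
  rw [Finset.sum_eq_zero fun j _ => hz j, zero_add]
  have hterm2 : ((tri d a g (m + 2)).submatrix (Fin.last (m + 1)).succAbove
      (Fin.last (m + 1)).succAbove) = tri d a g (m + 1) := by
    ext i j
    simp [tri, Fin.succAbove_last, Matrix.submatrix_apply]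
  set B : Matrix (Fin (m + 1)) (Fin (m + 1)) ℂ :=
    Matrix.of (fun i j : Fin (m + 1) =>
      triF d a g (i : ℕ) (if (j : ℕ) < m then (j : ℕ) else (j : ℕ) + 1)) with hB
  have hS1 : ((tri d a g (m + 2)).submatrix (Fin.last (m + 1)).succAbove
      (Fin.last m).castSucc.succAbove) = B := by
    ext i j
    simp only [tri, Matrix.submatrix_apply, Matrix.of_apply, hB]
    rw [coe_succAbove', coe_succAbove']
    have hi := i.isLt
    rw [if_pos (by simpa using hi)]
    simp
  have hBdet : B.det = g (m + 1) * (tri d a g m).det := by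
    rw [Matrix.det_succ_column B (Fin.last m), Fin.sum_univ_castSucc]
    have hz2 : ∀ i : Fin m,
        (-1 : ℂ) ^ (((i.castSucc : Fin (m+1)) : ℕ) + ((Fin.last m : Fin (m+1)) : ℕ)) *
          B i.castSucc (Fin.last m) *
          (B.submatrix (i.castSucc).succAbove (Fin.last m).succAbove).det = 0 := by
      intro i
      have : B i.castSucc (Fin.last m) = 0 := by
        have hi := i.isLt
        simp only [hB, Matrix.of_apply, Fin.coe_castSucc, Fin.val_last]
        rw [if_neg (lt_irrefl m)]
        simp only [triF]
        rw [if_neg (by omega), if_neg (by omega), if_neg (by omega)]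
      rw [this, mul_zero, zero_mul]
    rw [Finset.sum_eq_zero fun i _ => hz2 i, zero_add]
    have hBsub : (B.submatrix (Fin.last m).succAbove (Fin.last m).succAbove) = tri d a g m := by
      ext i j
      have hj := j.isLt
      simp only [Matrix.submatrix_apply, Fin.succAbove_last, hB, Matrix.of_apply,
        Fin.coe_castSucc, tri]
      rw [if_pos hj]
    have hBll : B (Fin.last m) (Fin.last m) = g (m + 1) := by
      simp only [hB, Matrix.of_apply, Fin.val_last]
      rw [if_neg (lt_irrefl m)]
      simp only [triF]
      simp
      intro h
      exact absurd h (by omega)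
    rw [hBsub, hBll]
    simp only [Fin.val_last, ← two_mul, pow_mul, neg_one_sq, one_pow, one_mul]
  have hA1 : tri d a g (m + 2) (Fin.last (m + 1)) (Fin.last m).castSucc = a (m + 1) := by
    simp only [tri, Matrix.of_apply, Fin.val_last, Fin.coe_castSucc, triF]
    simp
  have hA2 : tri d a g (m + 2) (Fin.last (m + 1)) (Fin.last (m + 1)) = d (m + 1) := by
    simp only [tri, Matrix.of_apply, Fin.val_last, triF]
    simp
  rw [hterm2, hS1, hBdet, hA1, hA2]
  simp only [Fin.val_last, Fin.coe_castSucc]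
  have hsgn1 : (-1 : ℂ) ^ (m + 1 + m) = -1 := by
    have : m + 1 + m = 2 * m + 1 := by ring
    rw [this, pow_succ, pow_mul, neg_one_sq, one_pow, one_mul]
  have hsgn2 : (-1 : ℂ) ^ (m + 1 + (m + 1)) = 1 := by
    have : m + 1 + (m + 1) = 2 * (m + 1) := by ring
    rw [this, pow_mul, neg_one_sq, one_pow]
  rw [hsgn1, hsgn2]
  ring

/-- Theorem 3.1 (CF-matrix, scalar case): if `g_n = p_{n+1}/q_{n+1} ≠ ∞ , 0`
(in shifted indexing, with `p (n+1) ≠ 0`), and `T` is tridiagonal with diagonal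
entries `b i` and off-diagonal entries satisfying `α_i γ_i = -c_i`, then `T` is
nonsingular and `(T⁻¹)_{1,1} = q_n / p_n = g_n⁻¹`. -/
theorem tridiagonal_inverse_entry_eq_cf_approximant_inv
    (n : ℕ) (b c α γ : ℕ → ℂ) (p q : ℕ → ℂ)
    (hp0 : p 0 = 1) (hq0 : q 0 = 0) (hp1 : p 1 = b 0) (hq1 : q 1 = 1)
    (hp : ∀ k, p (k + 2) = b (k + 1) * p (k + 1) + c (k + 1) * p k)
    (hq : ∀ k, q (k + 2) = b (k + 1) * q (k + 1) + c (k + 1) * q k)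
    (hαγ : ∀ i, 1 ≤ i → i ≤ n → α i * γ i = -(c i))
    (T : Matrix (Fin (n + 1)) (Fin (n + 1)) ℂ)
    (hT : ∀ i j : Fin (n + 1), T i j =
      if (i : ℕ) = (j : ℕ) then b i
      else if (i : ℕ) = (j : ℕ) + 1 then α i
      else if (j : ℕ) = (i : ℕ) + 1 then γ j else 0)
    (hpn : p (n + 1) ≠ 0) :
    IsUnit T.det ∧ T⁻¹ 0 0 = q (n + 1) / p (n + 1) := by
  have hTt : T = tri b α γ (n + 1) := by
    ext i j
    rw [hT]
    rfl
  have hdet : ∀ m, m ≤ n + 1 → (tri b α γ m).det = p m := by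
    intro m
    induction m using Nat.strong_induction_on with
    | _ m ih =>
      match m, ih with
      | 0, _ => intro _; simp [hp0]
      | 1, _ =>
        intro _
        rw [Matrix.det_fin_one]
        simp [tri, triF, hp1]
      | (k+2), ih =>
        intro hm
        rw [tri_det_rec, ih (k+1) (by omega) (by omega), ih k (by omega) (by omega),
          hp k, hαγ (k+1) (by omega) (by omega)]
        ring
  have hq' : ∀ m, m ≤ n →
      (tri (fun i => b (i+1)) (fun i => α (i+1)) (fun i => γ (i+1)) m).det = q (m+1) := by
    intro m
    induction m using Nat.strong_induction_on with
    | _ m ih =>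
      match m, ih with
      | 0, _ => intro _; simp [hq1]
      | 1, _ =>
        intro _
        rw [Matrix.det_fin_one]
        have h2 : q 2 = b 1 := by
          have := hq 0
          rw [hq0, hq1] at this
          simpa using this
        simp [tri, triF]
        exact h2.symm
      | (k+2), ih =>
        intro hm
        rw [tri_det_rec, ih (k+1) (by omega) (by omega), ih k (by omega) (by omega),
          hq (k+1), hαγ (k+2) (by omega) (by omega)]
        ring_nf
  have hdetT : T.det = p (n + 1) := by rw [hTt]; exact hdet (n+1) le_rfl
  have hu : IsUnit T.det := by rw [hdetT]; exact isUnit_iff_ne_zero.mpr hpn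
  refine ⟨hu, ?_⟩
  have hadj : T.adjugate 0 0 = q (n + 1) := by
    rw [Matrix.adjugate_fin_succ_eq_det_submatrix]
    have hsub : T.submatrix (Fin.succAbove 0) (Fin.succAbove 0)
        = tri (fun i => b (i+1)) (fun i => α (i+1)) (fun i => γ (i+1)) n := by
      ext i j
      rw [Matrix.submatrix_apply, hT]
      simp only [tri, triF, Matrix.of_apply, Fin.succAbove_zero, Function.comp_apply,
        Fin.val_succ, add_left_inj]
    rw [hsub, hq' n le_rfl]
    simp
  rw [Matrix.inv_def, Matrix.smul_apply, hadj, hdetT, Ring.inverse_eq_inv', smul_eq_mul,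
    div_eq_inv_mul]
end

section
/- If $A \in \mathbb{C}^{m\times m}$ is diagonalizable with eigenpairs $(\lambda_i, w_i)$, $i=1,\ldots,m$, and each matrix $T_n(\lambda_i) = \sum_{j=0}^{\ell} \lambda_i^j T_n^{(j)}$ is diagonalizable with eigenpairs $(\mu_{k,i}, v_{k,i})$, $k = 1,\ldots,n+1$, then the $(n+1)m$ vectors $v_{k,i} \otimes w_i$ form a basis of eigenvectors of $T_n(A) = \sum_{j=0}^{\ell} T_n^{(j)} \otimes A^j$ with eigenvalues $\mu_{k,i}$; in particular $T_n(A)$ is diagonalizable. -/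
open Matrix Kronecker

/-!
For an eigenvector `w` of `A` with eigenvalue `λ`, every `A ^ j` acts on `w` as `λ ^ j`, so
`T(A) = ∑ⱼ Tⱼ ⊗ A ^ j` acts on `x ⊗ w` as `T(λ) ⊗ 1`; hence `v ⊗ w` is an eigenvector of `T(A)`
for each eigenvector `v` of `T(λ)`. The `(n + 1) m` vectors `v_{k,i} ⊗ w_i` span: for fixed `i`
they span `ℂⁿ⁺¹ ⊗ w_i`, hence all `x ⊗ w_i`, hence all `x ⊗ y`, among them the standard basis.
Spanning with the right cardinality gives linear independence.
-/

section KronVec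

variable {R p q : Type*}

/-- `x ⊗ y`, indexed by `p × q` like `Matrix.kroneckerMap`. -/
def kronVec [Mul R] (x : p → R) (y : q → R) : p × q → R := fun r => x r.1 * y r.2

variable [CommSemiring R]

def kronVecBilin : (p → R) →ₗ[R] (q → R) →ₗ[R] (p × q → R) :=
  LinearMap.mk₂ R kronVec
    (fun _ _ _ => funext fun _ => add_mul _ _ _)
    (fun _ _ _ => funext fun _ => mul_assoc _ _ _)
    (fun _ _ _ => funext fun _ => mul_add _ _ _)
    (fun _ _ _ => funext fun _ => mul_left_comm _ _ _)

@[simp]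
theorem kronVecBilin_apply (x : p → R) (y : q → R) : kronVecBilin x y = kronVec x y := rfl

theorem kronVec_single_one [DecidableEq p] [DecidableEq q] (a : p) (b : q) :
    kronVec (Pi.single a (1 : R)) (Pi.single b 1) = Pi.single (a, b) 1 := by
  ext ⟨c, d⟩
  by_cases hc : c = a <;> by_cases hd : d = b <;> simp [kronVec, hc, hd]

theorem span_range_kronVec_eq_top [Finite p] [Finite q] {ι κ : Type*}
    (v : κ → ι → p → R) (w : ι → q → R)
    (hw : Submodule.span R (Set.range w) = ⊤)
    (hv : ∀ i, Submodule.span R (Set.range fun k => v k i) = ⊤) :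
    Submodule.span R (Set.range fun ki : κ × ι => kronVec (v ki.1 ki.2) (w ki.2)) = ⊤ := by
  classical
  set S := Submodule.span R (Set.range fun ki : κ × ι => kronVec (v ki.1 ki.2) (w ki.2))
  have left_mem (x : p → R) (i : ι) : kronVec x (w i) ∈ S := by
    have hx := Submodule.apply_mem_span_image_of_mem_span (kronVecBilin.flip (w i))
      (hv i ▸ Submodule.mem_top : x ∈ Submodule.span R (Set.range fun k => v k i))
    refine Submodule.span_mono ?_ hx
    rintro _ ⟨_, ⟨k, rfl⟩, rfl⟩
    exact ⟨(k, i), rfl⟩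
  have mem (x : p → R) (y : q → R) : kronVec x y ∈ S := by
    have hy := Submodule.apply_mem_span_image_of_mem_span (kronVecBilin x)
      (hw ▸ Submodule.mem_top : y ∈ Submodule.span R (Set.range w))
    refine (Submodule.span_le.mpr ?_) hy
    rintro _ ⟨_, ⟨i, rfl⟩, rfl⟩
    exact left_mem x i
  rw [eq_top_iff, ← (Pi.basisFun R (p × q)).span_eq, Submodule.span_le]
  rintro _ ⟨⟨a, b⟩, rfl⟩
  rw [Pi.basisFun_apply, ← kronVec_single_one]
  exact mem _ _

variable [Fintype p] [Fintype q]

theorem kronecker_mulVec_kronVec {p' q' : Type*} (T : Matrix p' p R) (B : Matrix q' q R)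
    (x : p → R) (y : q → R) :
    (T ⊗ₖ B) *ᵥ kronVec x y = kronVec (T *ᵥ x) (B *ᵥ y) := by
  ext ⟨a, b⟩
  simp only [kronVec, mulVec, dotProduct, kroneckerMap_apply, Fintype.sum_prod_type,
    Finset.sum_mul_sum]
  exact Finset.sum_congr rfl fun _ _ => Finset.sum_congr rfl fun _ _ => by ring

theorem pow_mulVec_of_mulVec_eq_smul [DecidableEq q] {B : Matrix q q R} {c : R} {y : q → R}
    (hy : B *ᵥ y = c • y) (j : ℕ) : (B ^ j) *ᵥ y = c ^ j • y := by
  induction j with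
  | zero => simp
  | succ j ih => rw [pow_succ, ← mulVec_mulVec, hy, mulVec_smul, ih, smul_smul, pow_succ']

theorem sum_kronecker_pow_mulVec_kronVec [DecidableEq q] {p' : Type*} (T : ℕ → Matrix p' p R) (s : Finset ℕ)
    {B : Matrix q q R} {c : R} {y : q → R} (hy : B *ᵥ y = c • y) (x : p → R) :
    (∑ j ∈ s, T j ⊗ₖ (B ^ j)) *ᵥ kronVec x y = kronVec ((∑ j ∈ s, c ^ j • T j) *ᵥ x) y := by
  simp only [sum_mulVec, kronecker_mulVec_kronVec, pow_mulVec_of_mulVec_eq_smul hy, smul_mulVec]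
  simp only [← kronVecBilin_apply, map_sum, map_smul, LinearMap.sum_apply, LinearMap.smul_apply]

end KronVec

theorem cf_matrix_eigendecomposition_general
    (m n ℓ : ℕ) (A : Matrix (Fin m) (Fin m) ℂ)
    (Tj : ℕ → Matrix (Fin (n + 1)) (Fin (n + 1)) ℂ)
    (lam : Fin m → ℂ) (w : Fin m → (Fin m → ℂ))
    (hAw : ∀ i, A.mulVec (w i) = lam i • w i)
    (hwsp : Submodule.span ℂ (Set.range w) = ⊤)
    (mu : Fin (n + 1) → Fin m → ℂ)
    (v : Fin (n + 1) → Fin m → (Fin (n + 1) → ℂ))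
    (hv : ∀ k i, (∑ j ∈ Finset.range (ℓ + 1), lam i ^ j • Tj j).mulVec (v k i)
      = mu k i • v k i)
    (hvsp : ∀ i, Submodule.span ℂ (Set.range fun k => v k i) = ⊤) :
    (∀ k i, (∑ j ∈ Finset.range (ℓ + 1), (Tj j) ⊗ₖ (A ^ j)).mulVec
        (fun p : Fin (n + 1) × Fin m => v k i p.1 * w i p.2)
      = mu k i • (fun p : Fin (n + 1) × Fin m => v k i p.1 * w i p.2)) ∧
    LinearIndependent ℂ
      (fun ki : Fin (n + 1) × Fin m =>
        (fun p : Fin (n + 1) × Fin m => v ki.1 ki.2 p.1 * w ki.2 p.2)) ∧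
    Submodule.span ℂ
      (Set.range fun ki : Fin (n + 1) × Fin m =>
        (fun p : Fin (n + 1) × Fin m => v ki.1 ki.2 p.1 * w ki.2 p.2)) = ⊤ := by
  have eigen (k : Fin (n + 1)) (i : Fin m) :
      (∑ j ∈ Finset.range (ℓ + 1), Tj j ⊗ₖ (A ^ j)) *ᵥ kronVec (v k i) (w i)
        = mu k i • kronVec (v k i) (w i) := by
    rw [sum_kronecker_pow_mulVec_kronVec Tj _ (hAw i), hv k i, ← kronVecBilin_apply,
      LinearMap.map_smul₂, kronVecBilin_apply]
  have span := span_range_kronVec_eq_top v w hwsp hvsp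
  exact ⟨eigen, linearIndependent_of_top_le_span_of_card_eq_finrank span.ge (by simp), span⟩

/-- If `A` is diagonalizable with eigenbasis `w_i` (eigenvalues `λ_i`) and each
`T_n(λ_i) = Σ_j λ_i^j T^{(j)}` is diagonalizable with eigenbasis `v_{k,i}`
(eigenvalues `μ_{k,i}`), then the `(n+1)m` vectors `v_{k,i} ⊗ w_i` form a basis
of eigenvectors of `T_n(A) = Σ_j T^{(j)} ⊗ A^j` with eigenvalues `μ_{k,i}`. -/
theorem cf_matrix_eigendecomposition
    (m n ℓ : ℕ) (A : Matrix (Fin m) (Fin m) ℂ)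
    (Tj : ℕ → Matrix (Fin (n + 1)) (Fin (n + 1)) ℂ)
    (lam : Fin m → ℂ) (w : Fin m → (Fin m → ℂ))
    (hAw : ∀ i, A.mulVec (w i) = lam i • w i)
    (hwli : LinearIndependent ℂ w)
    (hwsp : Submodule.span ℂ (Set.range w) = ⊤)
    (mu : Fin (n + 1) → Fin m → ℂ)
    (v : Fin (n + 1) → Fin m → (Fin (n + 1) → ℂ))
    (hv : ∀ k i, (∑ j ∈ Finset.range (ℓ + 1), lam i ^ j • Tj j).mulVec (v k i)
      = mu k i • v k i)
    (hvli : ∀ i, LinearIndependent ℂ (fun k => v k i))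
    (hvsp : ∀ i, Submodule.span ℂ (Set.range fun k => v k i) = ⊤) :
    (∀ k i, (∑ j ∈ Finset.range (ℓ + 1), (Tj j) ⊗ₖ (A ^ j)).mulVec
        (fun p : Fin (n + 1) × Fin m => v k i p.1 * w i p.2)
      = mu k i • (fun p : Fin (n + 1) × Fin m => v k i p.1 * w i p.2)) ∧
    LinearIndependent ℂ
      (fun ki : Fin (n + 1) × Fin m =>
        (fun p : Fin (n + 1) × Fin m => v ki.1 ki.2 p.1 * w ki.2 p.2)) ∧
    Submodule.span ℂ
      (Set.range fun ki : Fin (n + 1) × Fin m =>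
        (fun p : Fin (n + 1) × Fin m => v ki.1 ki.2 p.1 * w ki.2 p.2)) = ⊤ :=
  cf_matrix_eigendecomposition_general m n ℓ A Tj lam w hAw hwsp mu v hv hvsp
end

section
/- Suppose the pencil $T^{(0)} - z T^{(1)}$ of $(n+1)\times(n+1)$ complex matrices admits a Weierstrass canonical form $U(T^{(0)} - zT^{(1)})V = \mathrm{diag}(J^{(0)} - zI_{n^{(0)}},\ I_{n^{(1)}} - zJ^{(1)})$ with $U, V$ nonsingular, $J^{(0)}$ a direct sum of Jordan blocks $J(\tau_j, n_j^{(0)})$, $j=1,\ldots,k_0$, and $J^{(1)}$ nilpotent (direct sum of Jordan blocks with eigenvalue 0). Let $u = Ue_1$, $v^T = e_1^T V$, with blocks $u^{(j)}, v^{(j)}$ corresponding to the Jordan blocks. Then for all $z$ not equal to any $\tau_j$, $e_1^T (T^{(0)} - zT^{(1)})^{-1} e_1 = \sum_{j=1}^{k_0}\sum_{i=0}^{n_j^{(0)}-1} \frac{-\omega_{j,i}}{(z-\tau_j)^{i+1}} + \sum_{j=1}^{k_1}\sum_{i=0}^{n_j^{(1)}-1} z^i \sigma_{j,i}$, where $\omega_{j,i}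 = (v^{(j)})^T S_{n_j^{(0)}}^i u^{(j)}$ and $\sigma_{j,i} = (v^{(k_0+j)})^T S_{n_j^{(1)}}^i u^{(k_0+j)}$. -/
open Matrix

/-- The nilpotent upshift matrix `S_k` with ones on the superdiagonal. -/
def upShift (k : ℕ) : Matrix (Fin k) (Fin k) ℂ :=
  Matrix.of fun a b => if (b : ℕ) = (a : ℕ) + 1 then 1 else 0

/-- The finite part `J⁽⁰⁾` of a Weierstrass canonical form: direct sum of
Jordan blocks `J(τ_j, s0 j)`. -/
def weierstrassJ0 {k0 : ℕ} (s0 : Fin k0 → ℕ) (τ : Fin k0 → ℂ) :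
    Matrix (Σ j : Fin k0, Fin (s0 j)) (Σ j : Fin k0, Fin (s0 j)) ℂ :=
  Matrix.of fun x y =>
    if x.1 = y.1 then
      (if (y.2 : ℕ) = (x.2 : ℕ) then τ x.1
       else if (y.2 : ℕ) = (x.2 : ℕ) + 1 then 1 else 0)
    else 0

/-- The nilpotent part `J⁽¹⁾` of a Weierstrass canonical form: direct sum of
Jordan blocks with eigenvalue `0`. -/
def weierstrassJ1 {k1 : ℕ} (s1 : Fin k1 → ℕ) :
    Matrix (Σ j : Fin k1, Fin (s1 j)) (Σ j : Fin k1, Fin (s1 j)) ℂ :=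
  Matrix.of fun x y =>
    if x.1 = y.1 ∧ (y.2 : ℕ) = (x.2 : ℕ) + 1 then 1 else 0

lemma upShift_apply (m : ℕ) (a b : Fin m) :
    upShift m a b = if (b : ℕ) = (a : ℕ) + 1 then 1 else 0 := rfl

lemma upShift_pow_apply (m i : ℕ) (a b : Fin m) :
    ((upShift m) ^ i) a b = if (b : ℕ) = (a : ℕ) + i then 1 else 0 := by
  induction i generalizing a b with
  | zero => simp [Matrix.one_apply, Fin.ext_iff, eq_comm]
  | succ i ih =>
    rw [pow_succ, Matrix.mul_apply]
    simp only [ih, upShift_apply]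
    by_cases hb : (b : ℕ) = (a : ℕ) + i + 1
    · have hm : (a : ℕ) + i < m := by omega
      rw [Finset.sum_eq_single (⟨(a : ℕ) + i, hm⟩ : Fin m)]
      · simp [hb, Nat.add_assoc]
      · intro c _ hc
        have : (c : ℕ) ≠ (a : ℕ) + i := fun hh => hc (Fin.ext hh)
        simp [this]
      · simp
    · rw [if_neg (by omega), Finset.sum_eq_zero]
      intro c _
      by_cases hc : (c : ℕ) = (a : ℕ) + i
      · rw [if_pos hc, if_neg (by omega), one_mul]
      · rw [if_neg hc, zero_mul]

lemma upShift_pow_self (m : ℕ) : (upShift m) ^ m = 0 := by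
  ext a b
  rw [upShift_pow_apply]
  simp only [Matrix.zero_apply]
  rw [if_neg (by omega)]

lemma geom_inv {m : ℕ} (x : Matrix (Fin m) (Fin m) ℂ) (h : x ^ m = 0) :
    (1 - x) * ∑ i ∈ Finset.range m, x ^ i = 1 := by
  have h1 : (1 - x) = -(x - 1) := (neg_sub x 1).symm
  rw [h1, neg_mul, mul_geom_sum, h, zero_sub, neg_neg]

noncomputable def blkA (m : ℕ) (c : ℂ) : Matrix (Fin m) (Fin m) ℂ :=
  ∑ i ∈ Finset.range m, (-((c ^ (i + 1))⁻¹)) • (upShift m) ^ i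

noncomputable def blkB (m : ℕ) (z : ℂ) : Matrix (Fin m) (Fin m) ℂ :=
  ∑ i ∈ Finset.range m, z ^ i • (upShift m) ^ i

lemma blkA_mul (m : ℕ) (t z : ℂ) (h : z ≠ t) :
    ((t • (1 : Matrix (Fin m) (Fin m) ℂ) + upShift m) - z • 1) * blkA m (z - t) = 1 := by
  have hc0 : z - t ≠ 0 := sub_ne_zero.mpr h
  have hx : ((z - t)⁻¹ • upShift m) ^ m = 0 := by
    rw [smul_pow, upShift_pow_self, smul_zero]
  have e1 : ((t • (1 : Matrix (Fin m) (Fin m) ℂ) + upShift m) - z • 1)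
      = (-(z - t)) • (1 - (z - t)⁻¹ • upShift m) := by
    have h1 : (-(z - t)) • ((z - t)⁻¹ • upShift m) = -upShift m := by
      rw [smul_smul, neg_mul, mul_inv_cancel₀ hc0, neg_one_smul]
    rw [smul_sub, h1, sub_neg_eq_add]
    module
  have e2 : blkA m (z - t)
      = (-(z - t)⁻¹) • ∑ i ∈ Finset.range m, ((z - t)⁻¹ • upShift m) ^ i := by
    rw [Finset.smul_sum]
    refine Finset.sum_congr rfl fun i _ => ?_
    rw [smul_pow, smul_smul]
    congr 1
    rw [← inv_pow, pow_succ']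
    ring
  rw [e1, e2, smul_mul_assoc, mul_smul_comm, smul_smul, geom_inv _ hx]
  rw [neg_mul_neg, mul_inv_cancel₀ hc0, one_smul]

lemma blkB_mul (m : ℕ) (z : ℂ) :
    ((1 : Matrix (Fin m) (Fin m) ℂ) - z • upShift m) * blkB m z = 1 := by
  have hx : (z • upShift m) ^ m = 0 := by rw [smul_pow, upShift_pow_self, smul_zero]
  have e2 : blkB m z = ∑ i ∈ Finset.range m, (z • upShift m) ^ i := by
    refine Finset.sum_congr rfl fun i _ => ?_
    rw [smul_pow]
  rw [e2, geom_inv _ hx]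

lemma J0_sub {k0 : ℕ} (s0 : Fin k0 → ℕ) (τ : Fin k0 → ℂ) (z : ℂ) :
    weierstrassJ0 s0 τ - z • 1
      = blockDiagonal' (fun j => (τ j • 1 + upShift (s0 j)) - z • 1) := by
  ext x y
  rcases x with ⟨j, a⟩
  rcases y with ⟨j', b⟩
  by_cases h : j = j'
  · subst h
    simp only [Matrix.sub_apply, Matrix.smul_apply, Matrix.blockDiagonal'_apply_eq,
      Matrix.add_apply, Matrix.one_apply, weierstrassJ0, Matrix.of_apply, smul_eq_mul,
      Sigma.mk.inj_iff, heq_eq_eq, true_and, upShift_apply, eq_self_iff_true, if_true]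
    rcases eq_or_ne a b with rfl | hab
    · simp [show ¬((a : ℕ) = (a : ℕ) + 1) by omega]
    · have h1 : ¬((b : ℕ) = (a : ℕ)) := fun hh => hab (Fin.ext hh.symm)
      simp [hab, h1]
  · have h2 : ¬ (⟨j, a⟩ : Σ jj : Fin k0, Fin (s0 jj)) = ⟨j', b⟩ := by
      simp [Sigma.mk.inj_iff, h]
    simp only [Matrix.sub_apply, Matrix.smul_apply, Matrix.one_apply,
      Matrix.blockDiagonal'_apply_ne _ _ _ h, weierstrassJ0, Matrix.of_apply, if_neg h,
      smul_eq_mul, if_neg h2]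
    ring

lemma J1_sub {k1 : ℕ} (s1 : Fin k1 → ℕ) (z : ℂ) :
    (1 : Matrix (Σ j : Fin k1, Fin (s1 j)) (Σ j : Fin k1, Fin (s1 j)) ℂ) - z • weierstrassJ1 s1
      = blockDiagonal' (fun j => 1 - z • upShift (s1 j)) := by
  ext x y
  rcases x with ⟨j, a⟩
  rcases y with ⟨j', b⟩
  by_cases h : j = j'
  · subst h
    simp only [Matrix.sub_apply, Matrix.smul_apply, Matrix.blockDiagonal'_apply_eq,
      Matrix.one_apply, weierstrassJ1, Matrix.of_apply, smul_eq_mul, upShift_apply,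
      Sigma.mk.inj_iff, heq_eq_eq, true_and, eq_self_iff_true, if_true]
  · have h2 : ¬ (⟨j, a⟩ : Σ jj : Fin k1, Fin (s1 jj)) = ⟨j', b⟩ := by
      simp [Sigma.mk.inj_iff, h]
    simp only [Matrix.sub_apply, Matrix.smul_apply, Matrix.one_apply,
      Matrix.blockDiagonal'_apply_ne _ _ _ h, weierstrassJ1, Matrix.of_apply, smul_eq_mul,
      if_neg h2]
    rw [if_neg (by simp [h])]
    ring

section
variable {l m n o α : Type*}

lemma fromBlocks_sub' [Sub α] (A A' : Matrix n l α) (B B' : Matrix n m α) (C C' : Matrix o l α)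
    (D D' : Matrix o m α) :
    fromBlocks A B C D - fromBlocks A' B' C' D'
      = fromBlocks (A - A') (B - B') (C - C') (D - D') := by
  ext i j
  rcases i with i | i <;> rcases j with j | j <;> simp [fromBlocks]
end

lemma sum_coeff_extract {m : ℕ} (f g : Fin m → ℂ) (r : ℕ) (c : ℕ → ℂ)
    (P : ℕ → Matrix (Fin m) (Fin m) ℂ) :
    ∑ a : Fin m, ∑ b : Fin m, f a * (∑ i ∈ Finset.range r, c i • P i) a b * g b
      = ∑ i ∈ Finset.range r, c i * ∑ a : Fin m, ∑ b : Fin m, f a * P i a b * g b := by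
  simp only [Matrix.sum_apply, Matrix.smul_apply, smul_eq_mul, Finset.mul_sum,
    Finset.sum_mul]
  refine Eq.trans (Finset.sum_congr rfl fun a _ => Finset.sum_comm) ?_
  refine Eq.trans Finset.sum_comm ?_
  refine Finset.sum_congr rfl fun i _ => Finset.sum_congr rfl fun a _ =>
    Finset.sum_congr rfl fun b _ => by ring

lemma sum_blockDiagonal' {k : ℕ} {s : Fin k → ℕ} (M : ∀ j, Matrix (Fin (s j)) (Fin (s j)) ℂ)
    (f g : (Σ j : Fin k, Fin (s j)) → ℂ) :
    (∑ y : Σ j : Fin k, Fin (s j), ∑ x : Σ j : Fin k, Fin (s j),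
        f x * blockDiagonal' M x y * g y)
      = ∑ j : Fin k, ∑ a : Fin (s j), ∑ b : Fin (s j), f ⟨j, a⟩ * M j a b * g ⟨j, b⟩ := by
  rw [← Finset.univ_sigma_univ, Finset.sum_sigma]
  refine Finset.sum_congr rfl fun j _ => ?_
  refine Eq.trans (Finset.sum_congr rfl fun b _ => ?_) Finset.sum_comm
  rw [Finset.sum_sigma, Finset.sum_eq_single j]
  · exact Finset.sum_congr rfl fun a _ => by rw [Matrix.blockDiagonal'_apply_eq]
  · intro j' _ hj'
    exact Finset.sum_eq_zero fun a _ => by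
      rw [Matrix.blockDiagonal'_apply_ne _ _ _ hj', mul_zero, zero_mul]
  · intro h
    exact absurd (Finset.mem_univ j) h

/-- Theorem 4.2: partial fraction expansion of `e₁ᵀ (T⁰ - zT¹)⁻¹ e₁` via the
Weierstrass canonical form of the pencil `T⁰ - zT¹`. -/
theorem pencil_inverse_entry_partial_fraction_expansion
    (n k0 k1 : ℕ) (s0 : Fin k0 → ℕ) (s1 : Fin k1 → ℕ) (τ : Fin k0 → ℂ)
    (E : ((Σ j : Fin k0, Fin (s0 j)) ⊕ (Σ j : Fin k1, Fin (s1 j))) ≃ Fin (n + 1))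
    (T0 T1 U V : Matrix (Fin (n + 1)) (Fin (n + 1)) ℂ)
    (hU : IsUnit U.det) (hV : IsUnit V.det)
    (hW0 : U * T0 * V =
      Matrix.reindex E E (Matrix.fromBlocks (weierstrassJ0 s0 τ) 0 0 1))
    (hW1 : U * T1 * V =
      Matrix.reindex E E (Matrix.fromBlocks 1 0 0 (weierstrassJ1 s1)))
    (u v : Fin (n + 1) → ℂ)
    (hu : u = U.mulVec (Pi.single 0 1))
    (hv : v = Matrix.vecMul (Pi.single 0 1) V) :
    ∀ z : ℂ, (∀ j, z ≠ τ j) →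
      (T0 - z • T1)⁻¹ 0 0 =
        (∑ j : Fin k0, ∑ i ∈ Finset.range (s0 j),
          (-(∑ a : Fin (s0 j), ∑ b : Fin (s0 j),
              v (E (Sum.inl ⟨j, a⟩)) * ((upShift (s0 j)) ^ i) a b *
                u (E (Sum.inl ⟨j, b⟩))))
            / (z - τ j) ^ (i + 1))
        + ∑ j : Fin k1, ∑ i ∈ Finset.range (s1 j),
            z ^ i * (∑ a : Fin (s1 j), ∑ b : Fin (s1 j),
              v (E (Sum.inr ⟨j, a⟩)) * ((upShift (s1 j)) ^ i) a b *
                u (E (Sum.inr ⟨j, b⟩))) := by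
  intro z hz
  have hA : (weierstrassJ0 s0 τ - z • 1) * blockDiagonal' (fun j => blkA (s0 j) (z - τ j))
      = 1 := by
    rw [J0_sub, ← Matrix.blockDiagonal'_mul]
    have hfun : (fun j => ((τ j • 1 + upShift (s0 j)) - z • 1) * blkA (s0 j) (z - τ j))
        = fun j => (1 : Matrix (Fin (s0 j)) (Fin (s0 j)) ℂ) :=
      funext fun j => blkA_mul _ _ _ (hz j)
    rw [hfun]
    exact Matrix.blockDiagonal'_one
  have hB : ((1 : Matrix (Σ j : Fin k1, Fin (s1 j)) (Σ j : Fin k1, Fin (s1 j)) ℂ)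
        - z • weierstrassJ1 s1) * blockDiagonal' (fun j => blkB (s1 j) z) = 1 := by
    rw [J1_sub, ← Matrix.blockDiagonal'_mul]
    have hfun : (fun j => ((1 : Matrix (Fin (s1 j)) (Fin (s1 j)) ℂ) - z • upShift (s1 j))
          * blkB (s1 j) z)
        = fun j => (1 : Matrix (Fin (s1 j)) (Fin (s1 j)) ℂ) :=
      funext fun j => blkB_mul _ _
    rw [hfun]
    exact Matrix.blockDiagonal'_one
  have hP : U * (T0 - z • T1) * V
      = Matrix.reindex E E (Matrix.fromBlocks (weierstrassJ0 s0 τ - z • 1) 0 0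
          (1 - z • weierstrassJ1 s1)) := by
    have h1 : U * (T0 - z • T1) * V = U * T0 * V - z • (U * T1 * V) := by
      rw [mul_sub, sub_mul, Matrix.mul_smul, Matrix.smul_mul]
    have hFB : Matrix.fromBlocks (weierstrassJ0 s0 τ - z • 1) 0 0
          (1 - z • weierstrassJ1 s1)
        = Matrix.fromBlocks (weierstrassJ0 s0 τ) 0 0 1
          - z • Matrix.fromBlocks 1 0 0 (weierstrassJ1 s1) := by
      rw [Matrix.fromBlocks_smul, fromBlocks_sub']
      simp only [smul_zero, sub_zero]
    rw [h1, hW0, hW1, hFB]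
    simp only [Matrix.reindex_apply, Matrix.submatrix_sub, Matrix.submatrix_smul]
    rfl
  have hprod : Matrix.reindex E E (Matrix.fromBlocks (weierstrassJ0 s0 τ - z • 1) 0 0
        (1 - z • weierstrassJ1 s1))
      * Matrix.reindex E E (Matrix.fromBlocks
          (blockDiagonal' (fun j => blkA (s0 j) (z - τ j))) 0 0
          (blockDiagonal' (fun j => blkB (s1 j) z))) = 1 := by
    simp only [Matrix.reindex_apply]
    rw [Matrix.submatrix_mul_equiv, Matrix.fromBlocks_multiply]
    simp only [Matrix.mul_zero, Matrix.zero_mul, add_zero, zero_add, hA, hB]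
    rw [Matrix.fromBlocks_one, Matrix.submatrix_one_equiv]
  set RA := Matrix.reindex E E (Matrix.fromBlocks
      (blockDiagonal' (fun j => blkA (s0 j) (z - τ j))) 0 0
      (blockDiagonal' (fun j => blkB (s1 j) z))) with hRA
  have hNinv : (T0 - z • T1) * (V * RA * U) = 1 := by
    have hUcan : U * ((T0 - z • T1) * (V * RA * U)) = U := by
      have e : U * ((T0 - z • T1) * (V * RA * U)) = (U * (T0 - z • T1) * V) * RA * U := by
        simp only [← Matrix.mul_assoc]
      rw [e, hP, hprod, Matrix.one_mul]
    calc (T0 - z • T1) * (V * RA * U)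
        = U⁻¹ * U * ((T0 - z • T1) * (V * RA * U)) := by
          rw [Matrix.nonsing_inv_mul U hU, Matrix.one_mul]
      _ = U⁻¹ * (U * ((T0 - z • T1) * (V * RA * U))) := by rw [Matrix.mul_assoc]
      _ = U⁻¹ * U := by rw [hUcan]
      _ = 1 := Matrix.nonsing_inv_mul U hU
  have hinv : (T0 - z • T1)⁻¹ = V * RA * U := Matrix.inv_eq_right_inv hNinv
  rw [hinv]
  have hvV : ∀ p, V 0 p = v p := by
    intro p
    rw [hv, Matrix.single_one_vecMul]
    rfl
  have huU : ∀ q, U q 0 = u q := by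
    intro q
    rw [hu, Matrix.mulVec_single_one]
    rfl
  have e0 : (V * RA * U) 0 0 = ∑ q, ∑ p, v p * RA p q * u q := by
    rw [Matrix.mul_apply]
    refine Finset.sum_congr rfl fun q _ => ?_
    rw [Matrix.mul_apply, Finset.sum_mul]
    refine Finset.sum_congr rfl fun p _ => ?_
    rw [hvV, huU]
  have e1 : (∑ q, ∑ p, v p * RA p q * u q)
      = ∑ y : ((Σ j : Fin k0, Fin (s0 j)) ⊕ (Σ j : Fin k1, Fin (s1 j))),
          ∑ x : ((Σ j : Fin k0, Fin (s0 j)) ⊕ (Σ j : Fin k1, Fin (s1 j))),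
            v (E x) * (Matrix.fromBlocks
              (blockDiagonal' (fun j => blkA (s0 j) (z - τ j))) 0 0
              (blockDiagonal' (fun j => blkB (s1 j) z))) x y * u (E y) := by
    rw [← Equiv.sum_comp E (fun q => ∑ p, v p * RA p q * u q)]
    refine Finset.sum_congr rfl fun y _ => ?_
    rw [← Equiv.sum_comp E (fun p => v p * RA p (E y) * u (E y))]
    refine Finset.sum_congr rfl fun x _ => ?_
    rw [hRA]
    simp [Matrix.reindex_apply, Matrix.submatrix_apply]
  rw [e0, e1]
  simp only [Fintype.sum_sum_type, Matrix.fromBlocks_apply₁₁, Matrix.fromBlocks_apply₁₂,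
    Matrix.fromBlocks_apply₂₁, Matrix.fromBlocks_apply₂₂, Matrix.zero_apply, mul_zero,
    zero_mul, Finset.sum_const_zero, add_zero, zero_add]
  rw [sum_blockDiagonal' (fun j => blkA (s0 j) (z - τ j))
      (fun x => v (E (Sum.inl x))) (fun x => u (E (Sum.inl x))),
    sum_blockDiagonal' (fun j => blkB (s1 j) z)
      (fun x => v (E (Sum.inr x))) (fun x => u (E (Sum.inr x)))]
  congr 1
  · refine Finset.sum_congr rfl fun j _ => ?_
    rw [show blkA (s0 j) (z - τ j)
        = ∑ i ∈ Finset.range (s0 j), (-(((z - τ j) ^ (i + 1))⁻¹)) • (upShift (s0 j)) ^ i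
      from rfl]
    rw [sum_coeff_extract]
    refine Finset.sum_congr rfl fun i _ => ?_
    rw [div_eq_mul_inv]
    ring
  · refine Finset.sum_congr rfl fun j _ => ?_
    rw [show blkB (s1 j) z
        = ∑ i ∈ Finset.range (s1 j), (z ^ i) • (upShift (s1 j)) ^ i from rfl]
    rw [sum_coeff_extract]
end

section
/- With the setup of the diagonal Weierstrass form spectrum theorem: if $w \neq 0$ satisfies $(\tau_\alpha I - A)w = \lambda(\tau_\alpha I - \tilde{A})w$ for some index $\alpha \le n^{(0)}$, then there exists a nonzero vector $v \in \mathbb{C}^{n+1}$ such that $T(v \otimes w) = \lambda \tilde{T}(v \otimes w)$, where $T = T^{(0)}\otimes I - T^{(1)}\otimes A$ and $\tilde{T} = T^{(0)}\otimes I - T^{(1)}\otimes \tilde{A}$; indeed $v = Ve_\alpha$ works, where $V$ is the right Weierstrass transformation and $e_\alpha$ the $\alpha$-th unit vector. -/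
/-!
Since `U T⁽⁰⁾ V` and `U T⁽¹⁾ V` are diagonal, the unit vector `e_α` satisfies
`U T⁽⁰⁾ V e_α = τ_α U T⁽¹⁾ V e_α`, so `v = V e_α` is an eigenvector of the pencil,
`T⁽⁰⁾ v = τ_α T⁽¹⁾ v`. Substituting this into the Kronecker products gives
`(T⁽⁰⁾ ⊗ I - T⁽¹⁾ ⊗ A)(v ⊗ w) = T⁽¹⁾v ⊗ (τ_α I - A)w`, and likewise for `Ã`, so the
eigenvalue relation for `w` lifts to `v ⊗ w`.
-/

open Matrix Kronecker

namespace Matrix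

variable {R l m n p : Type*}

theorem kronecker_mulVec_mul [CommSemiring R] [Fintype m] [Fintype p]
    (M : Matrix l m R) (N : Matrix n p R) (v : m → R) (w : p → R) :
    (M ⊗ₖ N) *ᵥ (fun q => v q.1 * w q.2) = fun q => (M *ᵥ v) q.1 * (N *ᵥ w) q.2 := by
  funext q
  simp only [mulVec, dotProduct, kroneckerMap_apply, Fintype.sum_prod_type, Finset.sum_mul,
    Finset.mul_sum]
  rw [Finset.sum_comm]
  exact Finset.sum_congr rfl fun _ _ => Finset.sum_congr rfl fun _ _ => by ring

theorem reindex_mulVec_single [NonUnitalNonAssocSemiring R] [Fintype m] [Fintype n]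
    [DecidableEq m] [DecidableEq n] (e : m ≃ n) (M : Matrix m m R) (j : m) (c : R) :
    reindex e e M *ᵥ Pi.single (e j) c = (M *ᵥ Pi.single j c) ∘ e.symm := by
  rw [reindex_apply, submatrix_mulVec_equiv, Equiv.symm_symm, Pi.single_comp_equiv,
    Equiv.symm_apply_apply]

theorem fromBlocks_diagonal_mulVec_single_inl [NonAssocSemiring R] [Fintype l] [Fintype n]
    [DecidableEq l] [DecidableEq n] (d : l → R) (D : Matrix n n R) (i : l) :
    fromBlocks (diagonal d) 0 0 D *ᵥ Pi.single (Sum.inl i) 1 = Pi.single (Sum.inl i) (d i) := by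
  ext (k | k)
  · obtain rfl | h := eq_or_ne k i
    · simp
    · simp [h]
  · simp

theorem mulVec_eq_smul_mulVec_of_conj [CommRing R] [Fintype n] [DecidableEq n]
    {U V T₀ T₁ : Matrix n n R} (hU : IsUnit U.det) {x : n → R} {μ : R}
    (h : (U * T₀ * V) *ᵥ x = μ • (U * T₁ * V) *ᵥ x) :
    T₀ *ᵥ (V *ᵥ x) = μ • T₁ *ᵥ (V *ᵥ x) := by
  apply mulVec_injective_of_isUnit ((isUnit_iff_isUnit_det U).2 hU)
  simpa only [mulVec_mulVec, mulVec_smul, mul_assoc] using h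

theorem kronecker_pencil_mulVec_mul [CommRing R] [Fintype m] [Fintype n] [DecidableEq n]
    {T₀ T₁ : Matrix m m R} {v : m → R} {μ : R} (hv : T₀ *ᵥ v = μ • T₁ *ᵥ v)
    (A : Matrix n n R) (w : n → R) :
    (T₀ ⊗ₖ (1 : Matrix n n R) - T₁ ⊗ₖ A) *ᵥ (fun q => v q.1 * w q.2)
      = fun q => (T₁ *ᵥ v) q.1 * ((μ • (1 : Matrix n n R) - A) *ᵥ w) q.2 := by
  funext q
  simp only [sub_mulVec, kronecker_mulVec_mul, hv, one_mulVec, smul_mulVec, Pi.sub_apply,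
    Pi.smul_apply, smul_eq_mul]
  ring

theorem kronecker_pencil_eigenvector [CommRing R] [Fintype m] [Fintype n] [DecidableEq n]
    {T₀ T₁ : Matrix m m R} {v : m → R} {μ : R} (hv : T₀ *ᵥ v = μ • T₁ *ᵥ v)
    {A Ã : Matrix n n R} {w : n → R} {lam : R}
    (hw : (μ • (1 : Matrix n n R) - A) *ᵥ w = lam • (μ • (1 : Matrix n n R) - Ã) *ᵥ w) :
    (T₀ ⊗ₖ (1 : Matrix n n R) - T₁ ⊗ₖ A) *ᵥ (fun q => v q.1 * w q.2)
      = lam • (T₀ ⊗ₖ (1 : Matrix n n R) - T₁ ⊗ₖ Ã) *ᵥ (fun q => v q.1 * w q.2) := by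
  rw [kronecker_pencil_mulVec_mul hv, kronecker_pencil_mulVec_mul hv, hw]
  funext q
  simp only [Pi.smul_apply, smul_eq_mul]
  ring

end Matrix

theorem pencil_eigenvector_lift_diag_weierstrass_general
    (n m n0 n1 : ℕ) (hn : n0 + n1 = n + 1) (τ : Fin n0 → ℂ)
    (T0 T1 U V : Matrix (Fin (n + 1)) (Fin (n + 1)) ℂ)
    (hU : IsUnit U.det) (hV : IsUnit V.det)
    (hW0 : U * T0 * V =
      Matrix.reindex (finSumFinEquiv.trans (finCongr hn))
        (finSumFinEquiv.trans (finCongr hn))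
        (Matrix.fromBlocks (Matrix.diagonal τ) 0 0 1))
    (hW1 : U * T1 * V =
      Matrix.reindex (finSumFinEquiv.trans (finCongr hn))
        (finSumFinEquiv.trans (finCongr hn))
        (Matrix.fromBlocks 1 0 0 0))
    (A At : Matrix (Fin m) (Fin m) ℂ)
    (w : Fin m → ℂ) (α : Fin n0) (lam : ℂ)
    (hew : (τ α • (1 : Matrix (Fin m) (Fin m) ℂ) - A).mulVec w
      = lam • (τ α • (1 : Matrix (Fin m) (Fin m) ℂ) - At).mulVec w) :
    ∃ v : Fin (n + 1) → ℂ,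
      v = V.mulVec
        (Pi.single ((finSumFinEquiv.trans (finCongr hn)) (Sum.inl α)) 1) ∧
      v ≠ 0 ∧
      (T0 ⊗ₖ (1 : Matrix (Fin m) (Fin m) ℂ) - T1 ⊗ₖ A).mulVec
          (fun p : Fin (n + 1) × Fin m => v p.1 * w p.2)
        = lam • (T0 ⊗ₖ (1 : Matrix (Fin m) (Fin m) ℂ) - T1 ⊗ₖ At).mulVec
            (fun p : Fin (n + 1) × Fin m => v p.1 * w p.2) := by
  set κ := finSumFinEquiv.trans (finCongr hn)
  set e : Fin (n + 1) → ℂ := Pi.single (κ (Sum.inl α)) 1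
  have hT0 : (U * T0 * V) *ᵥ e = Pi.single (κ (Sum.inl α)) (τ α) := by
    rw [hW0, reindex_mulVec_single, fromBlocks_diagonal_mulVec_single_inl,
      Pi.single_comp_equiv, Equiv.symm_symm]
  have hT1 : (U * T1 * V) *ᵥ e = e := by
    rw [hW1, ← diagonal_one, reindex_mulVec_single, fromBlocks_diagonal_mulVec_single_inl,
      Pi.single_comp_equiv, Equiv.symm_symm]
  have hpencil : T0 *ᵥ (V *ᵥ e) = τ α • T1 *ᵥ (V *ᵥ e) :=
    mulVec_eq_smul_mulVec_of_conj hU (by rw [hT0, hT1, ← Pi.single_smul, smul_eq_mul, mul_one])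
  have hVe : V *ᵥ e ≠ 0 := by
    have he : e ≠ 0 := Pi.single_ne_zero_iff.2 one_ne_zero
    simpa only [mulVec_zero] using
      (mulVec_injective_of_isUnit ((isUnit_iff_isUnit_det V).2 hV)).ne he
  exact ⟨_, rfl, hVe, kronecker_pencil_eigenvector hpencil hew⟩

/-- Theorem 4.4 (iii): an eigenvector `w` of the pencil
`(τ_α I - A) - z(τ_α I - Ã)` lifts to an eigenvector `v ⊗ w` of the pencil
`T - zT̃`; indeed `v = V e_α` works. -/
theorem pencil_eigenvector_lift_diag_weierstrass
    (n m n0 n1 : ℕ) (hn : n0 + n1 = n + 1) (τ : Fin n0 → ℂ)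
    (T0 T1 U V : Matrix (Fin (n + 1)) (Fin (n + 1)) ℂ)
    (hU : IsUnit U.det) (hV : IsUnit V.det)
    (hW0 : U * T0 * V =
      Matrix.reindex (finSumFinEquiv.trans (finCongr hn))
        (finSumFinEquiv.trans (finCongr hn))
        (Matrix.fromBlocks (Matrix.diagonal τ) 0 0 1))
    (hW1 : U * T1 * V =
      Matrix.reindex (finSumFinEquiv.trans (finCongr hn))
        (finSumFinEquiv.trans (finCongr hn))
        (Matrix.fromBlocks 1 0 0 0))
    (A At : Matrix (Fin m) (Fin m) ℂ)
    (w : Fin m → ℂ) (hw : w ≠ 0) (α : Fin n0) (lam : ℂ)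
    (hew : (τ α • (1 : Matrix (Fin m) (Fin m) ℂ) - A).mulVec w
      = lam • (τ α • (1 : Matrix (Fin m) (Fin m) ℂ) - At).mulVec w) :
    ∃ v : Fin (n + 1) → ℂ,
      v = V.mulVec
        (Pi.single ((finSumFinEquiv.trans (finCongr hn)) (Sum.inl α)) 1) ∧
      v ≠ 0 ∧
      (T0 ⊗ₖ (1 : Matrix (Fin m) (Fin m) ℂ) - T1 ⊗ₖ A).mulVec
          (fun p : Fin (n + 1) × Fin m => v p.1 * w p.2)
        = lam • (T0 ⊗ₖ (1 : Matrix (Fin m) (Fin m) ℂ) - T1 ⊗ₖ At).mulVec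
            (fun p : Fin (n + 1) × Fin m => v p.1 * w p.2) :=
  pencil_eigenvector_lift_diag_weierstrass_general n m n0 n1 hn τ T0 T1 U V hU hV hW0 hW1 A At w α
    lam hew
end

section
/- The tails $t_n = \mathop{K}_{i=n+1}^{N}(c_i/b_i)$ of a finite continued fraction satisfy the backward recursion $t_n = c_{n+1}/(b_{n+1} + t_{n+1})$ (with $t_N = 0$), and the Schur complements $\Sigma_i$ of the associated CF-matrix $T_N(A)$ satisfy $\Sigma_i = b_i(A) + t_i(A)$ as rational matrix functions of $A$, provided all the matrices $b_{i+1}(A) + t_{i+1}(A)$ are invertible; in particular $\Sigma_0 = g_N(A)$, where $g_N(z) = b_0(z) + t_0(z)$ is the $N$-th approximant. -/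
/-! All the matrices `b_i(A)`, `c_i(A)`, `α_i(A)`, `γ_i(A)` lie in the commutative algebra of
polynomials in `A`, so they commute with everything in its centralizer. The centralizer is
closed under sums, products and `Matrix` inverses (whose junk value at a singular matrix is
`0`), hence it contains every tail `t_i`. The backward recursions for `Σ_i` and for
`b_i(A) + t_i(A)` then agree step by step, because
`γ_{i+1} S⁻¹ α_{i+1} = α_{i+1} γ_{i+1} S⁻¹ = -c_{i+1} S⁻¹` whenever `S` commutes with `α_{i+1}`. -/

open Polynomial

theorem sub_mul_mul_eq_add_mul_of_commute {R : Type*} [Ring R] {a b c g x : R}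
    (hxa : Commute x a) (hga : Commute g a) (hag : a * g = -c) :
    b - g * x * a = b + c * x := by
  rw [mul_assoc, hxa.eq, ← mul_assoc, hga.eq, hag, neg_mul, sub_neg_eq_add]

theorem AlgHom.mem_centralizer_range {R S B : Type*} [CommSemiring R] [CommSemiring S]
    [Semiring B] [Algebra R S] [Algebra R B] (f : S →ₐ[R] B) (x : S) :
    f x ∈ Subalgebra.centralizer R (Set.range f) := by
  rintro _ ⟨y, rfl⟩
  rw [← map_mul, mul_comm, map_mul]

namespace Matrix

variable {n R : Type*} [Fintype n] [DecidableEq n] [CommRing R]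

theorem commute_nonsing_inv_right {X Y : Matrix n n R} (h : Commute X Y) : Commute X Y⁻¹ := by
  simpa only [zpow_neg_one] using Matrix.Commute.zpow_right h (-1)

theorem nonsing_inv_mem_centralizer {s : Set (Matrix n n R)} {X : Matrix n n R}
    (hX : X ∈ Subalgebra.centralizer R s) : X⁻¹ ∈ Subalgebra.centralizer R s :=
  fun Y hY => (commute_nonsing_inv_right (hX Y hY)).eq

theorem cf_tails_mem_centralizer {N : ℕ} (A : Matrix n n R) (pb pc : ℕ → R[X])
    (t : ℕ → Matrix n n R) (htN : t N = 0)
    (ht : ∀ i, i < N → t i = aeval A (pc (i + 1)) * (aeval A (pb (i + 1)) + t (i + 1))⁻¹)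
    {i : ℕ} (hi : i ≤ N) : t i ∈ Subalgebra.centralizer R (Set.range (aeval (R := R) A)) := by
  induction hi using Nat.decreasingInduction with
  | self => simp only [htN, zero_mem]
  | of_succ k hk ih =>
    rw [ht k hk]
    exact mul_mem ((aeval A).mem_centralizer_range _) <| nonsing_inv_mem_centralizer <|
      add_mem ((aeval A).mem_centralizer_range _) ih

end Matrix

theorem schur_complements_eq_cf_tails_general
    (m N : ℕ) (A : Matrix (Fin m) (Fin m) ℂ)
    (pb pc pa pg : ℕ → Polynomial ℂ)
    (hαγ : ∀ i, 1 ≤ i → i ≤ N →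
      Polynomial.aeval A (pa i) * Polynomial.aeval A (pg i)
        = -(Polynomial.aeval A (pc i)))
    (t Sg : ℕ → Matrix (Fin m) (Fin m) ℂ)
    (htN : t N = 0)
    (ht : ∀ i, i < N → t i =
      Polynomial.aeval A (pc (i + 1)) *
        (Polynomial.aeval A (pb (i + 1)) + t (i + 1))⁻¹)
    (hSN : Sg N = Polynomial.aeval A (pb N))
    (hS : ∀ i, i < N → Sg i =
      Polynomial.aeval A (pb i) -
        Polynomial.aeval A (pg (i + 1)) * (Sg (i + 1))⁻¹ *
          Polynomial.aeval A (pa (i + 1))) :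
    (∀ i, i ≤ N → Sg i = Polynomial.aeval A (pb i) + t i) ∧
    Sg 0 = Polynomial.aeval A (pb 0) + t 0 := by
  have hSg : ∀ i, i ≤ N → Sg i = aeval A (pb i) + t i := by
    intro i hi
    induction hi using Nat.decreasingInduction with
    | self => rw [hSN, htN, add_zero]
    | of_succ k hk ih =>
      have hmem := Matrix.cf_tails_mem_centralizer A pb pc t htN ht (Nat.succ_le_of_lt hk)
      have hinv_comm : Commute (aeval A (pb (k + 1)) + t (k + 1))⁻¹ (aeval A (pa (k + 1))) :=
        (Matrix.nonsing_inv_mem_centralizer (add_mem ((aeval A).mem_centralizer_range _) hmem)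
          _ ⟨pa (k + 1), rfl⟩).symm
      have hga : Commute (aeval A (pg (k + 1))) (aeval A (pa (k + 1))) :=
        ((aeval A).mem_centralizer_range (pg (k + 1)) _ ⟨pa (k + 1), rfl⟩).symm
      rw [hS k hk, ih, ht k hk]
      exact sub_mul_mul_eq_add_mul_of_commute hinv_comm hga (hαγ (k + 1) k.succ_pos hk)
  exact ⟨hSg, hSg 0 N.zero_le⟩

/-- The Schur complements of a CF-matrix built from a finite continued fraction
with polynomial coefficients (evaluated at `A`) coincide with
`b_i(A) + t_i(A)`, where the tails `t_i` satisfy the backward recursion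
`t_i = c_{i+1}(A) (b_{i+1}(A) + t_{i+1}(A))⁻¹`, `t_N = 0`; in particular
`Σ_0 = g_N(A) = b_0(A) + t_0(A)`. -/
theorem schur_complements_eq_cf_tails
    (m N : ℕ) (A : Matrix (Fin m) (Fin m) ℂ)
    (pb pc pa pg : ℕ → Polynomial ℂ)
    (hαγ : ∀ i, 1 ≤ i → i ≤ N →
      Polynomial.aeval A (pa i) * Polynomial.aeval A (pg i)
        = -(Polynomial.aeval A (pc i)))
    (t Sg : ℕ → Matrix (Fin m) (Fin m) ℂ)
    (htN : t N = 0)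
    (ht : ∀ i, i < N → t i =
      Polynomial.aeval A (pc (i + 1)) *
        (Polynomial.aeval A (pb (i + 1)) + t (i + 1))⁻¹)
    (hinv : ∀ i, i < N → IsUnit (Polynomial.aeval A (pb (i + 1)) + t (i + 1)).det)
    (hSN : Sg N = Polynomial.aeval A (pb N))
    (hS : ∀ i, i < N → Sg i =
      Polynomial.aeval A (pb i) -
        Polynomial.aeval A (pg (i + 1)) * (Sg (i + 1))⁻¹ *
          Polynomial.aeval A (pa (i + 1))) :
    (∀ i, i ≤ N → Sg i = Polynomial.aeval A (pb i) + t i) ∧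
    Sg 0 = Polynomial.aeval A (pb 0) + t 0 :=
  schur_complements_eq_cf_tails_general m N A pb pc pa pg hαγ t Sg htN ht hSN hS
end
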